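/- arXiv:1304.2444 — 2 statements merged into one kernel-verified Lean document; each statement's English description precedes it below -/
import Mathlib

section
/- If finite random variables U, X, Y satisfy both Markov chains U → X → Y and X → U → Y, then there exist functions f of U and g of X such that P(f(U) = g(X)) = 1 and X → g(X) → Y is a Markov chain. -/
open scoped Classical
open Finset Real

noncomputable section

variable {Ω : Type*} [Fintype Ω]

/-- Pushforward probability of value `x` under random variable `X` w.r.t. pmf `p`. -/
def dist' {α : Type*} (p : Ω → ℝ) (X : Ω → α) (x : α) : ℝ :=
  ∑ ω, if X ω = x then p ω else 0

/-- Shannon entropy, base 2. -/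
def ent {α : Type*} [Fintype α] (p : Ω → ℝ) (X : Ω → α) : ℝ :=
  -∑ x, dist' p X x * Real.logb 2 (dist' p X x)

/-- Conditional entropy `H(X | Y)`. -/
def condEnt {α β : Type*} [Fintype α] [Fintype β] (p : Ω → ℝ) (X : Ω → α) (Y : Ω → β) : ℝ :=
  ent p (fun ω => (X ω, Y ω)) - ent p Y

/-- Mutual information `I(X ∧ Y)`. -/
def mi {α β : Type*} [Fintype α] [Fintype β] (p : Ω → ℝ) (X : Ω → α) (Y : Ω → β) : ℝ :=
  ent p X + ent p Y - ent p (fun ω => (X ω, Y ω))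

/-- Conditional mutual information `I(X ∧ Y | Z)`. -/
def cmi {α β γ : Type*} [Fintype α] [Fintype β] [Fintype γ]
    (p : Ω → ℝ) (X : Ω → α) (Y : Ω → β) (Z : Ω → γ) : ℝ :=
  ent p (fun ω => (X ω, Z ω)) + ent p (fun ω => (Y ω, Z ω))
    - ent p (fun ω => ((X ω, Y ω), Z ω)) - ent p Z

/-- `p` is a probability mass function on `Ω`. -/
def IsPMF (p : Ω → ℝ) : Prop := (∀ ω, 0 ≤ p ω) ∧ ∑ ω, p ω = 1

/-!
Vanishing conditional mutual information is equivalent, by Gibbs' inequality, to the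
factorisation `P(x, y, z) P(z) = P(x, z) P(y, z)`. Hence the two Markov chains say that whenever
`P(U = u, X = x) > 0`, the conditional law of `Y` given `(U, X) = (u, x)` equals both the
conditional law of `Y` given `X = x` and the one given `U = u`. Let `g x` be a canonical point
with the same conditional law of `Y` as `x`, and `f u := g x` for any `x` with
`P(U = u, X = x) > 0`. Then `f U = g X` almost surely, and `X → g X → Y` because `g X` determines
the conditional law of `Y` given `X`.
-/

open InformationTheory

theorem sum_mul_log_div_eq_zero_iff {ι : Type*} [Fintype ι] {P Q : ι → ℝ}
    (hP : ∀ i, 0 ≤ P i) (hQ : ∀ i, 0 ≤ Q i) (hPQ : ∀ i, Q i = 0 → P i = 0)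
    (hsum : ∑ i, P i = ∑ i, Q i) :
    ∑ i, P i * log (P i / Q i) = 0 ↔ P = Q := by
  have hterm : ∀ i, P i * log (P i / Q i) = Q i * klFun (P i / Q i) + (P i - Q i) := by
    intro i
    rcases (hQ i).eq_or_lt with hQi | hQi
    · simp [← hQi, hPQ i hQi.symm]
    · rw [klFun_apply]
      field_simp
      ring
  have hklFun : ∀ i, 0 ≤ Q i * klFun (P i / Q i) :=
    fun i => mul_nonneg (hQ i) (klFun_nonneg (div_nonneg (hP i) (hQ i)))
  simp_rw [hterm, sum_add_distrib, sum_sub_distrib, hsum, sub_self, add_zero,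
    sum_eq_zero_iff_of_nonneg fun i _ => hklFun i, mem_univ, true_implies, funext_iff]
  refine forall_congr' fun i => ?_
  rcases (hQ i).eq_or_lt with hQi | hQi
  · simp [← hQi, hPQ i hQi.symm]
  · rw [mul_eq_zero, or_iff_right hQi.ne', klFun_eq_zero_iff (div_nonneg (hP i) (hQi.le)),
      div_eq_one_iff_eq hQi.ne']

section dist'

variable {α β γ : Type*} (p : Ω → ℝ)

theorem dist'_nonneg (hp : ∀ ω, 0 ≤ p ω) (W : Ω → α) (a : α) : 0 ≤ dist' p W a :=
  sum_nonneg fun ω _ => by split_ifs <;> simp [hp ω]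

theorem le_dist'_apply (hp : ∀ ω, 0 ≤ p ω) (W : Ω → α) (ω₀ : Ω) : p ω₀ ≤ dist' p W (W ω₀) := by
  simpa [dist'] using single_le_sum (f := fun ω => if W ω = W ω₀ then p ω else 0)
    (fun ω _ => by split_ifs <;> simp [hp ω]) (mem_univ ω₀)

theorem dist'_le_dist'_comp (hp : ∀ ω, 0 ≤ p ω) (W : Ω → α) (F : α → β) (a : α) :
    dist' p W a ≤ dist' p (fun ω => F (W ω)) (F a) :=
  sum_le_sum fun ω _ => by
    by_cases h : W ω = a
    · simp [h]
    · rw [if_neg h]; split_ifs <;> simp [hp ω]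

theorem dist'_eq_zero_of_comp (hp : ∀ ω, 0 ≤ p ω) {W : Ω → α} (F : α → β) {a : α}
    (h : dist' p (fun ω => F (W ω)) (F a) = 0) : dist' p W a = 0 :=
  (h ▸ dist'_le_dist'_comp p hp W F a).antisymm (dist'_nonneg p hp W a)

theorem dist'_pair_eq_zero_of_left (hp : ∀ ω, 0 ≤ p ω) {A : Ω → α} {a : α} (B : Ω → β) (b : β)
    (h : dist' p A a = 0) : dist' p (fun ω => (A ω, B ω)) (a, b) = 0 :=
  dist'_eq_zero_of_comp p hp Prod.fst h

theorem dist'_pair_eq_zero_of_right (hp : ∀ ω, 0 ≤ p ω) (A : Ω → α) (a : α) {B : Ω → β} {b : β}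
    (h : dist' p B b = 0) : dist' p (fun ω => (A ω, B ω)) (a, b) = 0 :=
  dist'_eq_zero_of_comp p hp Prod.snd h

theorem dist'_congr {W : Ω → α} {V : Ω → β} {a : α} {b : β} (h : ∀ ω, W ω = a ↔ V ω = b) :
    dist' p W a = dist' p V b := by
  simp only [dist', h]

theorem sum_dist'_mul [Fintype α] (W : Ω → α) (h : α → ℝ) :
    ∑ a, dist' p W a * h a = ∑ ω, p ω * h (W ω) := by
  simp only [dist', sum_mul, ite_mul, zero_mul]
  rw [sum_comm]
  simp

theorem sum_dist'_mul_comp [Fintype α] [Fintype β] (W : Ω → α) (F : α → β) (h : β → ℝ) :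
    ∑ a, dist' p W a * h (F a) = ∑ b, dist' p (fun ω => F (W ω)) b * h b := by
  rw [sum_dist'_mul, sum_dist'_mul]

theorem sum_dist' [Fintype α] (W : Ω → α) : ∑ a, dist' p W a = ∑ ω, p ω := by
  simpa using sum_dist'_mul p W 1

theorem dist'_comp [Fintype α] (W : Ω → α) (F : α → β) (b : β) :
    dist' p (fun ω => F (W ω)) b = ∑ a, if F a = b then dist' p W a else 0 := by
  simpa [dist', mul_ite] using (sum_dist'_mul p W fun a => if F a = b then 1 else 0).symm

theorem dist'_pair_comp [Fintype α] (W : Ω → α) (F : α → β) (a : α) (b : β) :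
    dist' p (fun ω => (W ω, F (W ω))) (a, b) = if F a = b then dist' p W a else 0 := by
  rw [dist'_comp p W fun a => (a, F a)]
  simp [ite_and]

theorem sum_dist'_pair_left [Fintype α] (A : Ω → α) (B : Ω → β) (b : β) :
    ∑ a, dist' p (fun ω => (A ω, B ω)) (a, b) = dist' p B b := by
  simp only [dist', Prod.ext_iff, ite_and]
  rw [sum_comm]
  simp

end dist'

section entropy

variable {α β γ : Type*} [Fintype α] [Fintype β] [Fintype γ] (p : Ω → ℝ)

theorem ent_mul_log_two (W : Ω → α) :
    ent p W * log 2 = -∑ a, dist' p W a * log (dist' p W a) := by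
  have hlog2 : log 2 ≠ 0 := (log_pos one_lt_two).ne'
  simp only [ent, logb, neg_mul, sum_mul, mul_assoc, div_mul_cancel₀ _ hlog2]

def condIndepDist' (X : Ω → α) (Y : Ω → β) (Z : Ω → γ) (i : (α × β) × γ) : ℝ :=
  dist' p (fun ω => (X ω, Z ω)) (i.1.1, i.2) * dist' p (fun ω => (Y ω, Z ω)) (i.1.2, i.2) /
    dist' p Z i.2

variable {p}

theorem cmi_mul_log_two (hp : ∀ ω, 0 ≤ p ω) (X : Ω → α) (Y : Ω → β) (Z : Ω → γ) :
    cmi p X Y Z * log 2 = ∑ i, dist' p (fun ω => ((X ω, Y ω), Z ω)) i *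
      log (dist' p (fun ω => ((X ω, Y ω), Z ω)) i / condIndepDist' p X Y Z i) := by
  set J := dist' p (fun ω => ((X ω, Y ω), Z ω))
  have hterm : ∀ i, J i * log (J i / condIndepDist' p X Y Z i) =
      J i * log (J i) + J i * log (dist' p Z i.2)
        - J i * log (dist' p (fun ω => (X ω, Z ω)) (i.1.1, i.2))
        - J i * log (dist' p (fun ω => (Y ω, Z ω)) (i.1.2, i.2)) := by
    intro i
    have hJ0 : 0 ≤ J i := dist'_nonneg p hp _ i
    rcases hJ0.eq_or_lt with hJ | hJ
    · rw [← hJ]; simp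
    have hXZ := hJ.trans_le (dist'_le_dist'_comp p hp _ (fun i => (i.1.1, i.2)) i)
    have hYZ := hJ.trans_le (dist'_le_dist'_comp p hp _ (fun i => (i.1.2, i.2)) i)
    have hZ := hJ.trans_le (dist'_le_dist'_comp p hp _ Prod.snd i)
    rw [condIndepDist', log_div hJ.ne' (by positivity), log_div (by positivity) hZ.ne',
      log_mul hXZ.ne' hYZ.ne']
    ring
  have hXZ : ∑ i, J i * log (dist' p (fun ω => (X ω, Z ω)) (i.1.1, i.2)) =
      -(ent p (fun ω => (X ω, Z ω)) * log 2) := by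
    rw [ent_mul_log_two, neg_neg]
    exact sum_dist'_mul_comp p _ (fun i : (α × β) × γ => (i.1.1, i.2)) fun b => log (dist' p _ b)
  have hYZ : ∑ i, J i * log (dist' p (fun ω => (Y ω, Z ω)) (i.1.2, i.2)) =
      -(ent p (fun ω => (Y ω, Z ω)) * log 2) := by
    rw [ent_mul_log_two, neg_neg]
    exact sum_dist'_mul_comp p _ (fun i : (α × β) × γ => (i.1.2, i.2)) fun b => log (dist' p _ b)
  have hZ : ∑ i, J i * log (dist' p Z i.2) = -(ent p Z * log 2) := by
    rw [ent_mul_log_two, neg_neg]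
    exact sum_dist'_mul_comp p _ Prod.snd fun b => log (dist' p _ b)
  have hXYZ : ∑ i, J i * log (J i) = -(ent p (fun ω => ((X ω, Y ω), Z ω)) * log 2) := by
    rw [ent_mul_log_two, neg_neg]
  simp only [hterm, sum_add_distrib, sum_sub_distrib, hXZ, hYZ, hZ, hXYZ, cmi]
  ring

theorem sum_condIndepDist' (X : Ω → α) (Y : Ω → β) (Z : Ω → γ) :
    ∑ i, condIndepDist' p X Y Z i = ∑ ω, p ω := by
  calc ∑ i, condIndepDist' p X Y Z i
      = ∑ z, (∑ x, dist' p (fun ω => (X ω, Z ω)) (x, z)) *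
          (∑ y, dist' p (fun ω => (Y ω, Z ω)) (y, z)) / dist' p Z z := by
        rw [Fintype.sum_prod_type_right]
        simp only [Fintype.sum_prod_type, sum_mul_sum, sum_div, condIndepDist']
    _ = ∑ z, dist' p Z z := by simp only [sum_dist'_pair_left, mul_self_div_self]
    _ = ∑ ω, p ω := sum_dist' p Z

theorem cmi_eq_zero_iff (hp : ∀ ω, 0 ≤ p ω) (X : Ω → α) (Y : Ω → β) (Z : Ω → γ) :
    cmi p X Y Z = 0 ↔ ∀ x y z, dist' p (fun ω => ((X ω, Y ω), Z ω)) ((x, y), z) * dist' p Z z =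
      dist' p (fun ω => (X ω, Z ω)) (x, z) * dist' p (fun ω => (Y ω, Z ω)) (y, z) := by
  set J := dist' p (fun ω => ((X ω, Y ω), Z ω))
  have hlog2 : log 2 ≠ 0 := (log_pos one_lt_two).ne'
  have hQ0 : ∀ i, 0 ≤ condIndepDist' p X Y Z i := fun i =>
    div_nonneg (mul_nonneg (dist'_nonneg p hp _ _) (dist'_nonneg p hp _ _)) (dist'_nonneg p hp _ _)
  have hQJ : ∀ i, condIndepDist' p X Y Z i = 0 → J i = 0 := by
    intro i hi
    simp only [condIndepDist', div_eq_zero_iff, mul_eq_zero] at hi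
    rcases hi with (h | h) | h
    · exact dist'_eq_zero_of_comp p hp (fun i : (α × β) × γ => (i.1.1, i.2)) h
    · exact dist'_eq_zero_of_comp p hp (fun i : (α × β) × γ => (i.1.2, i.2)) h
    · exact dist'_eq_zero_of_comp p hp Prod.snd h
  rw [← mul_eq_zero_iff_right hlog2, cmi_mul_log_two hp, sum_mul_log_div_eq_zero_iff
    (dist'_nonneg p hp _) hQ0 hQJ (by rw [sum_dist', sum_condIndepDist']), funext_iff,
    Prod.forall, Prod.forall]
  refine forall₃_congr fun x y z => ?_
  rcases (dist'_nonneg p hp Z z).eq_or_lt with hZ | hZ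
  · have hXZ := dist'_pair_eq_zero_of_right p hp X x hZ.symm
    have hXYZ := dist'_pair_eq_zero_of_right p hp (fun ω => (X ω, Y ω)) (x, y) hZ.symm
    simp [condIndepDist', J, ← hZ, hXZ, hXYZ]
  · rw [condIndepDist', eq_div_iff hZ.ne']

end entropy

section condDist'

variable {α β γ : Type*} (p : Ω → ℝ)

/-- `P(Y = y | X = x)`, with the junk value `0` when `P(X = x) = 0`. -/
def condDist' (X : Ω → α) (Y : Ω → β) (x : α) (y : β) : ℝ :=
  dist' p (fun ω => (X ω, Y ω)) (x, y) / dist' p X x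

variable {p}

theorem dist'_mul_eq_of_condDist'_eq (hp : ∀ ω, 0 ≤ p ω) {X : Ω → α} {Y : Ω → β} {x x' : α}
    {y : β} (h : condDist' p X Y x y = condDist' p X Y x' y) :
    dist' p (fun ω => (X ω, Y ω)) (x, y) * dist' p X x' =
      dist' p X x * dist' p (fun ω => (X ω, Y ω)) (x', y) := by
  by_cases hx : dist' p X x = 0
  · rw [hx, dist'_pair_eq_zero_of_left p hp Y y hx, zero_mul, zero_mul]
  by_cases hx' : dist' p X x' = 0
  · rw [hx', dist'_pair_eq_zero_of_left p hp Y y hx', mul_zero, mul_zero]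
  rw [condDist', condDist', div_eq_div_iff hx hx'] at h
  linear_combination h

theorem condDist'_pair_eq_of_cmi_eq_zero [Fintype α] [Fintype β] [Fintype γ]
    (hp : ∀ ω, 0 ≤ p ω) {X : Ω → α} {Y : Ω → β} {Z : Ω → γ} (h : cmi p X Y Z = 0) {x : α} {z : γ}
    (hxz : dist' p (fun ω => (X ω, Z ω)) (x, z) ≠ 0) :
    condDist' p (fun ω => (X ω, Z ω)) Y (x, z) = condDist' p Z Y z := by
  have hz : dist' p Z z ≠ 0 := mt (dist'_pair_eq_zero_of_right p hp X x) hxz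
  funext y
  have hXZY : dist' p (fun ω => ((X ω, Z ω), Y ω)) ((x, z), y) =
      dist' p (fun ω => ((X ω, Y ω), Z ω)) ((x, y), z) :=
    dist'_congr p fun ω => by simp only [Prod.mk.injEq]; tauto
  have hZY : dist' p (fun ω => (Z ω, Y ω)) (z, y) = dist' p (fun ω => (Y ω, Z ω)) (y, z) :=
    dist'_congr p fun ω => by simp only [Prod.mk.injEq]; tauto
  rw [condDist', condDist', div_eq_div_iff hxz hz, hXZY, hZY, (cmi_eq_zero_iff hp X Y Z).mp h]
  ring

theorem condDist'_eq_of_cmi_eq_zero_of_cmi_eq_zero [Fintype α] [Fintype β] [Fintype γ]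
    (hp : ∀ ω, 0 ≤ p ω) {U : Ω → α} {X : Ω → β} {Y : Ω → γ} (h₁ : cmi p U Y X = 0)
    (h₂ : cmi p X Y U = 0) {u : α} {x : β}
    (hux : dist' p (fun ω => (U ω, X ω)) (u, x) ≠ 0) :
    condDist' p X Y x = condDist' p U Y u := by
  have hswap : ∀ ω, (U ω, X ω) = (u, x) ↔ (X ω, U ω) = (x, u) := fun ω => by
    simp only [Prod.mk.injEq]; tauto
  have hxu : dist' p (fun ω => (X ω, U ω)) (x, u) ≠ 0 := by rwa [← dist'_congr p hswap]
  rw [← condDist'_pair_eq_of_cmi_eq_zero hp h₁ hux, ← condDist'_pair_eq_of_cmi_eq_zero hp h₂ hxu]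
  funext y
  have hUXY : dist' p (fun ω => ((U ω, X ω), Y ω)) ((u, x), y) =
      dist' p (fun ω => ((X ω, U ω), Y ω)) ((x, u), y) :=
    dist'_congr p fun ω => by simp only [Prod.mk.injEq]; tauto
  rw [condDist', condDist', dist'_congr p hswap, hUXY]

theorem cmi_comp_eq_zero [Fintype α] [Fintype β] [Fintype γ] (hp : ∀ ω, 0 ≤ p ω)
    (X : Ω → α) (Y : Ω → β) (g : α → γ)
    (hg : ∀ x x', g x = g x' → condDist' p X Y x = condDist' p X Y x') :
    cmi p X Y (fun ω => g (X ω)) = 0 := by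
  rw [cmi_eq_zero_iff hp]
  intro x y z
  rw [dist'_pair_comp p (fun ω => (X ω, Y ω)) (fun q => g q.1), dist'_pair_comp p X g]
  split_ifs with hxz
  · rw [dist'_comp p X g, dist'_comp p (fun ω => (X ω, Y ω)) fun q => (q.2, g q.1),
      Fintype.sum_prod_type, mul_sum, mul_sum]
    refine sum_congr rfl fun x' _ => ?_
    simp only [Prod.mk.injEq, ite_and, sum_ite_eq', mem_univ, if_true]
    split_ifs with hx'z
    · exact dist'_mul_eq_of_condDist'_eq hp (congrFun (hg x x' (hxz.trans hx'z.symm)) y)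
    · rw [mul_zero, mul_zero]
  · rw [zero_mul, zero_mul]

end condDist'

/-- Double Markov: if `U -∘- X -∘- Y` and `X -∘- U -∘- Y`, then there are functions
`f` of `U` and `g` of `X` with `P(f(U) = g(X)) = 1` and `X -∘- g(X) -∘- Y`. -/
theorem stmt2 {Ω 𝒰 𝒳 𝒴 : Type*} [Fintype Ω] [Fintype 𝒰] [Fintype 𝒳] [Fintype 𝒴]
    (p : Ω → ℝ) (hp : IsPMF p) (U : Ω → 𝒰) (X : Ω → 𝒳) (Y : Ω → 𝒴)
    (h1 : cmi p U Y X = 0) (h2 : cmi p X Y U = 0) :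
    ∃ (f : 𝒰 → 𝒳) (g : 𝒳 → 𝒳),
      (∑ ω, if f (U ω) = g (X ω) then p ω else 0) = 1 ∧
      cmi p X Y (fun ω => g (X ω)) = 0 := by
  obtain ⟨hp0, hp1⟩ := hp
  obtain ⟨ω₀⟩ : Nonempty Ω :=
    univ_nonempty_iff.mp (nonempty_of_sum_ne_zero (hp1 ▸ one_ne_zero))
  have : Nonempty 𝒳 := ⟨X ω₀⟩
  let g : 𝒳 → 𝒳 := fun x => (⟦x⟧ : Quotient (Setoid.ker (condDist' p X Y))).out
  let f : 𝒰 → 𝒳 := fun u =>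
    g (Classical.epsilon fun x => dist' p (fun ω => (U ω, X ω)) (u, x) ≠ 0)
  refine ⟨f, g, ?_, cmi_comp_eq_zero hp0 X Y g fun x x' hg => ?_⟩
  · rw [← hp1]
    refine sum_congr rfl fun ω _ => ?_
    by_cases hω : p ω = 0
    · simp [hω]
    have hUX : dist' p (fun ω => (U ω, X ω)) (U ω, X ω) ≠ 0 :=
      (((hp0 ω).lt_of_ne' hω).trans_le (le_dist'_apply p hp0 _ ω)).ne'
    have hx₀ := Classical.epsilon_spec (p := fun x => dist' p (fun ω => (U ω, X ω)) (U ω, x) ≠ 0)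
      ⟨X ω, hUX⟩
    refine if_pos (congrArg Quotient.out (Quotient.sound ?_))
    exact (condDist'_eq_of_cmi_eq_zero_of_cmi_eq_zero hp0 h1 h2 hx₀).trans
      (condDist'_eq_of_cmi_eq_zero_of_cmi_eq_zero hp0 h1 h2 hUX).symm
  · rw [← Setoid.ker_apply_mk_out (f := condDist' p X Y) x,
      ← Setoid.ker_apply_mk_out (f := condDist' p X Y) x']
    exact congrArg _ hg
end
end

section
/- Let U₁,...,U_r be finite random variables satisfying the interactive conditions: U_{2i+1} → (X, U^{2i}) → Y and U_{2i} → (Y, U^{2i-1}) → X for all applicable i, and X → U^r → Y. Then I(X, Y ∧ U^r) − I(X ∧ Y) = Σ_{i odd} I(X ∧ U_i | Y, U^{i−1}) + Σ_{i even} I(Y ∧ U_i | X, U^{i−1}). -/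
open scoped Classical
open Finset Real

noncomputable section

variable {Ω : Type*} [Fintype Ω]

/-- The prefix `U^i = (U_1, ..., U_i)` of an interactive sequence. -/
def pre {𝒰 : Type*} {r : ℕ} (U : Fin r → Ω → 𝒰) (i : ℕ) (h : i ≤ r) :
    Ω → (Fin i → 𝒰) :=
  fun ω k => U (Fin.castLE h k) ω

/-- Condition (P1): interactive Markov conditions.  Index `j : Fin r` corresponds to the
`(j+1)`-st message; messages with odd 1-based index (`Even j.val`) are sent by terminal 𝒳. -/
def P1cond {𝒳 𝒴 𝒰 : Type*} [Fintype 𝒳] [Fintype 𝒴] [Fintype 𝒰] {r : ℕ}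
    (p : Ω → ℝ) (X : Ω → 𝒳) (Y : Ω → 𝒴) (U : Fin r → Ω → 𝒰) : Prop :=
  ∀ j : Fin r,
    (Even j.val → cmi p (U j) Y (fun ω => (X ω, pre U j.val j.isLt.le ω)) = 0) ∧
    (¬ Even j.val → cmi p (U j) X (fun ω => (Y ω, pre U j.val j.isLt.le ω)) = 0)

/-- Condition (P2): `X -∘- U^r -∘- Y`. -/
def P2cond {𝒳 𝒴 𝒰 : Type*} [Fintype 𝒳] [Fintype 𝒴] [Fintype 𝒰] {r : ℕ}
    (p : Ω → ℝ) (X : Ω → 𝒳) (Y : Ω → 𝒴) (U : Fin r → Ω → 𝒰) : Prop :=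
  cmi p X Y (pre U r le_rfl) = 0


/-!
Put `Φ(V) = I(X,Y ∧ V) + I(X ∧ Y | V)`; in entropies `Φ(V) = H(X,Y) + H(X,V) + H(Y,V) - 2 H(X,Y,V)`.
For constant `V` this is `I(X ∧ Y)`, and by (P2) `Φ(U^r) = I(X,Y ∧ U^r)`. If a message `U` is sent
by `X`, i.e. `U → (X,V) → Y`, then `Φ(U,V) - Φ(V) - I(X ∧ U | Y,V) = I(U ∧ Y | X,V) = 0`, an identity
between entropies of subtuples of `(X,Y,U,V)`; messages sent by `Y` are the same with `X`, `Y`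
swapped. Telescoping over the `r` messages gives the theorem.
-/

section Relabel

variable {α β : Type*} (p : Ω → ℝ)

lemma dist'_comp_of_injective {f : α → β} (hf : Function.Injective f) (X : Ω → α) (a : α) :
    dist' p (fun ω => f (X ω)) (f a) = dist' p X a := by
  simp only [dist', hf.eq_iff]

lemma dist'_comp_of_notMem_range {f : α → β} (X : Ω → α) {b : β} (hb : b ∉ Set.range f) :
    dist' p (fun ω => f (X ω)) b = 0 :=
  Finset.sum_eq_zero fun ω _ => if_neg fun h => hb ⟨X ω, h⟩

variable [Fintype α] [Fintype β]

lemma ent_comp_of_injective {f : α → β} (hf : Function.Injective f) (X : Ω → α) :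
    ent p (fun ω => f (X ω)) = ent p X := by
  unfold ent
  congr 1
  refine (Fintype.sum_of_injective f hf _ _ (fun b hb => ?_) fun a => ?_).symm
  · rw [dist'_comp_of_notMem_range p X hb, zero_mul]
  · rw [dist'_comp_of_injective p hf]

lemma ent_congr (f : α → β) (g : β → α) (hgf : Function.LeftInverse g f) {X : Ω → α}
    {Y : Ω → β} (h : ∀ ω, Y ω = f (X ω)) : ent p Y = ent p X := by
  rw [funext h, ent_comp_of_injective p hgf.injective]

end Relabel

section Potential

variable {α β γ μ : Type*} [Fintype α] [Fintype β] [Fintype γ] [Fintype μ]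
  (p : Ω → ℝ) (X : Ω → α) (Y : Ω → β)

lemma mi_add_cmi_congr_right {δ : Type*} [Fintype δ] (f : δ → γ) (g : γ → δ)
    (hgf : Function.LeftInverse g f) {V : Ω → γ} {W : Ω → δ} (h : ∀ ω, V ω = f (W ω)) :
    mi p (fun ω => (X ω, Y ω)) V + cmi p X Y V
      = mi p (fun ω => (X ω, Y ω)) W + cmi p X Y W := by
  have hX : ent p (fun ω => (X ω, V ω)) = ent p (fun ω => (X ω, W ω)) :=
    ent_congr p (fun x => (x.1, f x.2)) (fun x => (x.1, g x.2))
      (fun x => by simp only [hgf x.2]) fun ω => by rw [h]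
  have hY : ent p (fun ω => (Y ω, V ω)) = ent p (fun ω => (Y ω, W ω)) :=
    ent_congr p (fun x => (x.1, f x.2)) (fun x => (x.1, g x.2))
      (fun x => by simp only [hgf x.2]) fun ω => by rw [h]
  have hXY : ent p (fun ω => ((X ω, Y ω), V ω)) = ent p (fun ω => ((X ω, Y ω), W ω)) :=
    ent_congr p (fun x => (x.1, f x.2)) (fun x => (x.1, g x.2))
      (fun x => by simp only [hgf x.2]) fun ω => by rw [h]
  unfold mi cmi
  linarith

lemma ent_prod_of_unique [Unique γ] (V : Ω → γ) : ent p (fun ω => (X ω, V ω)) = ent p X :=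
  ent_congr p (fun a => (a, default)) Prod.fst (fun _ => rfl)
    fun ω => by rw [Unique.eq_default (V ω)]

lemma mi_add_cmi_of_unique [Unique γ] (V : Ω → γ) :
    mi p (fun ω => (X ω, Y ω)) V + cmi p X Y V = mi p X Y := by
  unfold mi cmi
  beta_reduce
  rw [ent_prod_of_unique p X V, ent_prod_of_unique p Y V,
    ent_prod_of_unique p (fun ω => (X ω, Y ω)) V]
  ring

lemma mi_add_cmi_comm (V : Ω → γ) :
    mi p (fun ω => (X ω, Y ω)) V + cmi p X Y V = mi p (fun ω => (Y ω, X ω)) V + cmi p Y X V := by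
  have hXY : ent p (fun ω => (Y ω, X ω)) = ent p (fun ω => (X ω, Y ω)) :=
    ent_congr p Prod.swap Prod.swap (fun _ => rfl) fun _ => rfl
  have hXYV : ent p (fun ω => ((Y ω, X ω), V ω)) = ent p (fun ω => ((X ω, Y ω), V ω)) :=
    ent_congr p (fun x => (x.1.swap, x.2)) (fun x => (x.1.swap, x.2)) (fun _ => rfl) fun _ => rfl
  unfold mi cmi
  linarith

lemma mi_add_cmi_prod_of_cmi_eq_zero (U : Ω → μ) (V : Ω → γ)
    (hU : cmi p U Y (fun ω => (X ω, V ω)) = 0) :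
    mi p (fun ω => (X ω, Y ω)) (fun ω => (U ω, V ω)) + cmi p X Y (fun ω => (U ω, V ω))
      = mi p (fun ω => (X ω, Y ω)) V + cmi p X Y V + cmi p X U (fun ω => (Y ω, V ω)) := by
  have hXUV : ent p (fun ω => (X ω, (U ω, V ω))) = ent p (fun ω => (U ω, (X ω, V ω))) :=
    ent_congr p (fun x => (x.2.1, x.1, x.2.2)) (fun x => (x.2.1, x.1, x.2.2))
      (fun _ => rfl) fun _ => rfl
  have hYUV : ent p (fun ω => (Y ω, (U ω, V ω))) = ent p (fun ω => (U ω, (Y ω, V ω))) :=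
    ent_congr p (fun x => (x.2.1, x.1, x.2.2)) (fun x => (x.2.1, x.1, x.2.2))
      (fun _ => rfl) fun _ => rfl
  have hYXV : ent p (fun ω => (Y ω, (X ω, V ω))) = ent p (fun ω => ((X ω, Y ω), V ω)) :=
    ent_congr p (fun x => (x.1.2, x.1.1, x.2)) (fun x => ((x.2.1, x.1), x.2.2))
      (fun _ => rfl) fun _ => rfl
  have hXYV : ent p (fun ω => (X ω, (Y ω, V ω))) = ent p (fun ω => ((X ω, Y ω), V ω)) :=
    ent_congr p (fun x => (x.1.1, x.1.2, x.2)) (fun x => ((x.1, x.2.1), x.2.2))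
      (fun _ => rfl) fun _ => rfl
  have hUYXV : ent p (fun ω => ((U ω, Y ω), (X ω, V ω)))
      = ent p (fun ω => ((X ω, Y ω), (U ω, V ω))) :=
    ent_congr p (fun x => ((x.2.1, x.1.2), (x.1.1, x.2.2)))
      (fun x => ((x.2.1, x.1.2), (x.1.1, x.2.2))) (fun _ => rfl) fun _ => rfl
  have hXUYV : ent p (fun ω => ((X ω, U ω), (Y ω, V ω)))
      = ent p (fun ω => ((X ω, Y ω), (U ω, V ω))) :=
    ent_congr p (fun x => ((x.1.1, x.2.1), (x.1.2, x.2.2)))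
      (fun x => ((x.1.1, x.2.1), (x.1.2, x.2.2))) (fun _ => rfl) fun _ => rfl
  unfold mi cmi at *
  linarith

end Potential

omit [Fintype Ω] in
lemma pre_succ_apply {𝒰 : Type*} {r : ℕ} (U : Fin (r + 1) → Ω → 𝒰) (ω : Ω) :
    pre U (r + 1) le_rfl ω = Fin.snoc (pre U r r.le_succ ω) (U (Fin.last r) ω) := by
  funext k
  refine Fin.lastCases ?_ (fun i => ?_) k
  · rw [Fin.snoc_last]
    rfl
  · rw [Fin.snoc_castSucc]
    rfl

lemma mi_add_cmi_pre {𝒳 𝒴 𝒰 : Type*} [Fintype 𝒳] [Fintype 𝒴] [Fintype 𝒰] {r : ℕ}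
    (p : Ω → ℝ) (X : Ω → 𝒳) (Y : Ω → 𝒴) (U : Fin r → Ω → 𝒰) (h1 : P1cond p X Y U) :
    mi p (fun ω => (X ω, Y ω)) (pre U r le_rfl) + cmi p X Y (pre U r le_rfl)
      = mi p X Y + ∑ j : Fin r,
          if Even j.val
          then cmi p X (U j) (fun ω => (Y ω, pre U j.val j.isLt.le ω))
          else cmi p Y (U j) (fun ω => (X ω, pre U j.val j.isLt.le ω)) := by
  induction r with
  | zero => simpa using mi_add_cmi_of_unique p X Y (pre U 0 le_rfl)
  | succ r ih =>
    have hsnoc := mi_add_cmi_congr_right p X Y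
      (W := fun ω => (U (Fin.last r) ω, pre U r r.le_succ ω))
      (fun x : 𝒰 × (Fin r → 𝒰) => Fin.snoc (α := fun _ => 𝒰) x.2 x.1)
      (fun w => (w (Fin.last r), Fin.init w))
      (fun x => by simp only [Fin.snoc_last, Fin.init_snoc]) (pre_succ_apply U)
    rw [hsnoc, Fin.sum_univ_castSucc, ← add_assoc]
    -- `U ∘ castSucc` has, definitionally, the same prefixes and terms as `U` below `r`
    have ih' := ih (fun i => U i.castSucc) fun j => h1 j.castSucc
    have hlast := h1 (Fin.last r)
    simp only [Fin.val_last] at hlast ⊢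
    by_cases hr : Even r
    · rw [if_pos hr, mi_add_cmi_prod_of_cmi_eq_zero p X Y _ _ (hlast.1 hr)]
      exact congrArg (· + _) ih'
    · rw [if_neg hr, mi_add_cmi_comm, mi_add_cmi_prod_of_cmi_eq_zero p Y X _ _ (hlast.2 hr),
        ← mi_add_cmi_comm]
      exact congrArg (· + _) ih'

theorem stmt11_general {Ω 𝒳 𝒴 𝒰 : Type*} [Fintype Ω] [Fintype 𝒳] [Fintype 𝒴] [Fintype 𝒰] {r : ℕ}
    (p : Ω → ℝ) (X : Ω → 𝒳) (Y : Ω → 𝒴) (U : Fin r → Ω → 𝒰)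
    (h1 : P1cond p X Y U) (h2 : P2cond p X Y U) :
    mi p (fun ω => (X ω, Y ω)) (pre U r le_rfl) - mi p X Y
      = ∑ j : Fin r,
          if Even j.val
          then cmi p X (U j) (fun ω => (Y ω, pre U j.val j.isLt.le ω))
          else cmi p Y (U j) (fun ω => (X ω, pre U j.val j.isLt.le ω)) := by
  have h := mi_add_cmi_pre p X Y U h1
  rw [P2cond] at h2
  linarith

/-- Decomposition: `I(X,Y ∧ U^r) - I(X ∧ Y)` equals the total interactive-communication rate
`Σ_{i odd} I(X ∧ U_i | Y, U^{i-1}) + Σ_{i even} I(Y ∧ U_i | X, U^{i-1})`. -/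
theorem stmt11 {Ω 𝒳 𝒴 𝒰 : Type*} [Fintype Ω] [Fintype 𝒳] [Fintype 𝒴] [Fintype 𝒰] {r : ℕ}
    (p : Ω → ℝ) (hp : IsPMF p) (X : Ω → 𝒳) (Y : Ω → 𝒴) (U : Fin r → Ω → 𝒰)
    (h1 : P1cond p X Y U) (h2 : P2cond p X Y U) :
    mi p (fun ω => (X ω, Y ω)) (pre U r le_rfl) - mi p X Y
      = ∑ j : Fin r,
          if Even j.val
          then cmi p X (U j) (fun ω => (Y ω, pre U j.val j.isLt.le ω))
          else cmi p Y (U j) (fun ω => (X ω, pre U j.val j.isLt.le ω)) :=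
  stmt11_general p X Y U h1 h2
end
end
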